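/- arXiv:2210.05707 — 2 statements merged into one kernel-verified Lean document; each statement's English description precedes it below -/
import Mathlib

section
/- For any A ∈ ℂ^{K×K} and any binary matrix M ∈ {0,1}^{K×K}, one has the identity ∑_{ρ ∈ S_K} sgn(ρ) · det((P_ρ A) ⊙ M) = |G_M| · det(A), where the sum is over all permutations ρ of {1,…,K}. -/
/-!
Expanding each determinant by the Leibniz formula, the sum becomes
`∑_σ sgn σ · ∏ₖ M_{k,σ(k)} · ∑_ρ sgn ρ · ∏ₖ A_{ρ(k),σ(k)}`. The inner sum is the Leibniz
expansion of `A` with its columns permuted by `σ`, i.e. `sgn σ · det A`, so the signs cancel and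
`det A` is weighted by `∑_σ ∏ₖ M_{k,σ(k)}`, which for a binary `M` counts `G_M`.
-/

noncomputable section

/-- The permutation matrix `P_ρ` with `(P_ρ)_{k,ℓ} = 1` iff `ℓ = ρ(k)`, so that the
`k`-th row of `P_ρ * A` is the `ρ(k)`-th row of `A`. -/
def permMat {K : ℕ} (ρ : Equiv.Perm (Fin K)) : Matrix (Fin K) (Fin K) ℂ :=
  Matrix.of fun k l => if l = ρ k then 1 else 0

open Equiv Finset

namespace Matrix

variable {n R : Type*} [Fintype n] [DecidableEq n] [CommRing R]

theorem det_eq_sum_sign_mul_prod_apply_perm (B : Matrix n n R) :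
    B.det = ∑ σ : Perm n, ((Perm.sign σ : ℤ) : R) * ∏ i, B i (σ i) := by
  rw [← det_transpose, det_apply']
  rfl

theorem sum_sign_mul_prod_apply_perm (A : Matrix n n R) (σ : Perm n) :
    ∑ ρ : Perm n, ((Perm.sign ρ : ℤ) : R) * ∏ i, A (ρ i) (σ i)
      = ((Perm.sign σ : ℤ) : R) * A.det := by
  rw [← det_permute', det_apply']
  rfl

theorem sum_sign_mul_det_hadamard_submatrix (A M : Matrix n n R) :
    ∑ ρ : Perm n, ((Perm.sign ρ : ℤ) : R) * ((A.submatrix ρ id) ⊙ M).det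
      = (∑ σ : Perm n, ∏ i, M i (σ i)) * A.det := by
  simp_rw [det_eq_sum_sign_mul_prod_apply_perm ((A.submatrix _ id) ⊙ M), hadamard_apply,
    submatrix_apply, id, prod_mul_distrib, mul_sum]
  rw [sum_comm, sum_mul]
  refine sum_congr rfl fun σ _ => ?_
  have hsign : ((Perm.sign σ : ℤ) : R) * ((Perm.sign σ : ℤ) : R) = 1 := by
    rw [← Int.cast_mul, ← Units.val_mul, Int.units_mul_self, Units.val_one, Int.cast_one]
  calc ∑ ρ : Perm n, ((Perm.sign ρ : ℤ) : R) * (((Perm.sign σ : ℤ) : R) *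
          ((∏ i, A (ρ i) (σ i)) * ∏ i, M i (σ i)))
      = (∏ i, M i (σ i)) * ((Perm.sign σ : ℤ) : R) *
          ∑ ρ : Perm n, ((Perm.sign ρ : ℤ) : R) * ∏ i, A (ρ i) (σ i) := by
        rw [mul_sum]; exact sum_congr rfl fun ρ _ => by ring
    _ = (∏ i, M i (σ i)) * A.det := by
        rw [sum_sign_mul_prod_apply_perm, mul_assoc, ← mul_assoc _ _ A.det, hsign, one_mul]

end Matrix

theorem permMat_mul {K : ℕ} (ρ : Perm (Fin K)) (A : Matrix (Fin K) (Fin K) ℂ) :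
    permMat ρ * A = A.submatrix ρ id := by
  ext k j
  simp [permMat, Matrix.mul_apply]

theorem sum_prod_perm_eq_card_of_binary {n R : Type*} [Fintype n] [DecidableEq n]
    [CommSemiring R] (M : Matrix n n R) [DecidablePred fun σ : Perm n => ∀ k, M k (σ k) = 1]
    (hM : ∀ k l, M k l = 0 ∨ M k l = 1) :
    ∑ σ : Perm n, ∏ i, M i (σ i) = (#{σ : Perm n | ∀ k, M k (σ k) = 1} : R) := by
  classical
  have hboole : ∀ k l, M k l = if M k l = 1 then 1 else 0 := fun k l => by
    rcases hM k l with h | h <;> simp [h]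
  have hprod (σ : Perm n) : ∏ i, M i (σ i) = if ∀ k, M k (σ k) = 1 then 1 else 0 := by
    rw [Fintype.prod_congr _ _ fun i => hboole i (σ i)]
    convert Fintype.prod_boole ..
  rw [sum_congr rfl fun σ _ => hprod σ, sum_boole]

/-- For any `A ∈ ℂ^{K×K}` and binary `M ∈ {0,1}^{K×K}`,
`∑_{ρ ∈ S_K} sgn(ρ) · det((P_ρ A) ⊙ M) = |G_M| · det A`, where `G_M` is the set of
permutations `σ` with `M_{k,σ(k)} = 1` for all `k`. -/
theorem stmt_4 (K : ℕ) (A M : Matrix (Fin K) (Fin K) ℂ)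
    (hM : ∀ k l, M k l = 0 ∨ M k l = 1) :
    ∑ ρ : Equiv.Perm (Fin K),
        ((Equiv.Perm.sign ρ : ℤ) : ℂ) * (Matrix.hadamard (permMat ρ * A) M).det
      = ((Finset.univ.filter fun σ : Equiv.Perm (Fin K) => ∀ k, M k (σ k) = 1).card : ℂ)
          * A.det := by
  simp_rw [permMat_mul]
  rw [Matrix.sum_sign_mul_det_hadamard_submatrix, sum_prod_perm_eq_card_of_binary M hM]
end
end

section
/- Let I_k = [(k−1)/4, k/4) for k = 1,2,3,4. Then the system E(I_1 ∪ I_3, 4ℤ ∪ (4ℤ+2)) is not a Riesz basis for L²(I_1 ∪ I_3), and the system E(I_2 ∪ I_4, (4ℤ+1) ∪ (4ℤ+3)) is not a Riesz basis for L²(I_2 ∪ I_4). -/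
open MeasureTheory Complex Real Set
open scoped Classical

noncomputable section

/-- Lebesgue measure restricted to `[0,1)`. -/
def μ01 : MeasureTheory.Measure ℝ := MeasureTheory.volume.restrict (Set.Ico (0:ℝ) 1)

/-- The Hilbert space `L²[0,1)` of complex square-integrable functions on `[0,1)`. -/
abbrev L2 : Type := MeasureTheory.Lp ℂ 2 μ01

/-- A function on ℝ as an element of `L²[0,1)` (junk value `0` if not in `L²`). -/
def toL2 (f : ℝ → ℂ) : L2 :=
  if h : MeasureTheory.MemLp f 2 μ01 then h.toLp f else 0

/-- The function `x ↦ e^{2πiλx} · χ_S(x)` as an element of `L²[0,1)`. -/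
def expChar (S : Set ℝ) (lam : ℝ) : L2 :=
  toL2 (S.indicator fun x => Complex.exp (2 * Real.pi * lam * x * Complex.I))

/-- `L²(S)` viewed as the subset of `L²[0,1)` of elements vanishing a.e. outside `S`. -/
def L2on (S : Set ℝ) : Set L2 := {g : L2 | ∀ᵐ x ∂μ01, x ∉ S → g x = 0}

/-- A family is a Riesz sequence: there are `0 < A ≤ B` giving a two-sided ℓ²-norm
equivalence on (finite) linear combinations. -/
def IsRieszSequence {ι : Type*} (f : ι → L2) : Prop :=
  ∃ A B : ℝ, 0 < A ∧ A ≤ B ∧ ∀ c : ι →₀ ℂ,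
    A * ∑ i ∈ c.support, ‖c i‖ ^ 2 ≤ ‖∑ i ∈ c.support, c i • f i‖ ^ 2 ∧
    ‖∑ i ∈ c.support, c i • f i‖ ^ 2 ≤ B * ∑ i ∈ c.support, ‖c i‖ ^ 2

/-- A family is a Riesz basis for the subspace of `L²[0,1)` given by the subset `V`:
it is a Riesz sequence whose closed linear span is `V`. -/
def IsRieszBasis {ι : Type*} (f : ι → L2) (V : Set L2) : Prop :=
  IsRieszSequence f ∧ closure (↑(Submodule.span ℂ (Set.range f)) : Set L2) = V

/-!
The closed span of the system is a proper subspace of `L²(S)`. In both cases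
`S = J ∪ (J + 1/2)` with `J` an interval of length `1/4`, and all frequencies `λ` of the
system have the same parity, so `e^{πiλ} = ε` is one fixed sign. Translating by `1/2`
multiplies `e^{2πiλx}` by `ε`, hence
`⟪χ_J - ε χ_{J+1/2}, e^{2πiλx} χ_S⟫ = (1 - ε²) ∫_J e^{2πiλx} dx = 0`:
the nonzero function `χ_J - ε χ_{J+1/2} ∈ L²(S)` is orthogonal to the whole system.
-/

open scoped InnerProductSpace ComplexConjugate

theorem notMem_closure_span_of_inner_eq_zero {𝕜 E ι : Type*} [RCLike 𝕜]
    [NormedAddCommGroup E] [InnerProductSpace 𝕜 E] (f : ι → E) {g : E} (hg : g ≠ 0)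
    (h : ∀ i, ⟪g, f i⟫_𝕜 = 0) : g ∉ closure (Submodule.span 𝕜 (range f) : Set E) := by
  intro hmem
  have hspan : Submodule.span 𝕜 (range f) ≤ (𝕜 ∙ g)ᗮ :=
    Submodule.span_le.2 <| range_subset_iff.2 fun i ↦
      Submodule.mem_orthogonal_singleton_iff_inner_right.2 (h i)
  have hg' : g ∈ (𝕜 ∙ g)ᗮ := closure_minimal hspan (Submodule.isClosed_orthogonal (𝕜 ∙ g)) hmem
  exact hg (inner_self_eq_zero.1 (Submodule.mem_orthogonal_singleton_iff_inner_right.1 hg'))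

instance : IsFiniteMeasure μ01 := ⟨by simp [μ01]⟩

theorem measureReal_μ01_Ico {a b : ℝ} (hab : a ≤ b) (h0 : 0 ≤ a) (h1 : b ≤ 1) :
    μ01.real (Ico a b) = b - a := by
  rw [μ01, measureReal_restrict_apply measurableSet_Ico,
    inter_eq_self_of_subset_left (Ico_subset_Ico h0 h1), Real.volume_real_Ico_of_le hab]

theorem setIntegral_μ01_Ico {a b : ℝ} (hab : a ≤ b) (h0 : 0 ≤ a) (h1 : b ≤ 1) (f : ℝ → ℂ) :
    ∫ x in Ico a b, f x ∂μ01 = ∫ x in a..b, f x := by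
  rw [μ01, Measure.restrict_restrict measurableSet_Ico,
    inter_eq_self_of_subset_left (Ico_subset_Ico h0 h1), integral_Ico_eq_integral_Ioo,
    intervalIntegral.integral_of_le hab, integral_Ioc_eq_integral_Ioo]

theorem coeFn_expChar {S : Set ℝ} (hS : MeasurableSet S) (lam : ℝ) :
    expChar S lam =ᵐ[μ01] S.indicator fun x => cexp (2 * π * lam * x * I) := by
  have hmem : MemLp (S.indicator fun x => cexp (2 * π * lam * x * I)) 2 μ01 := by
    refine MemLp.of_bound ((Measurable.indicator (by fun_prop) hS).aestronglyMeasurable) 1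
      (Filter.Eventually.of_forall fun x ↦ ?_)
    by_cases hx : x ∈ S <;> simp [hx, Complex.norm_exp]
  rw [expChar, toL2, dif_pos hmem]
  exact hmem.coeFn_toLp

def chiIco (a b : ℝ) : L2 :=
  indicatorConstLp 2 (measurableSet_Ico (a := a) (b := b)) (measure_ne_top μ01 _) 1

theorem coeFn_chiIco (a b : ℝ) : chiIco a b =ᵐ[μ01] (Ico a b).indicator fun _ ↦ 1 :=
  indicatorConstLp_coeFn

theorem inner_chiIco_expChar {a b : ℝ} (hab : a ≤ b) (h0 : 0 ≤ a) (h1 : b ≤ 1) {S : Set ℝ}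
    (hS : MeasurableSet S) (hJS : Ico a b ⊆ S) (lam : ℝ) :
    ⟪chiIco a b, expChar S lam⟫_ℂ = ∫ x in a..b, cexp (2 * π * lam * x * I) := by
  rw [chiIco, L2.inner_indicatorConstLp_one, ← setIntegral_μ01_Ico hab h0 h1]
  refine setIntegral_congr_ae measurableSet_Ico ((coeFn_expChar hS lam).mono fun x hx hxJ ↦ ?_)
  rw [hx, indicator_of_mem (hJS hxJ)]

theorem integral_cexp_add_right (lam a b t : ℝ) :
    ∫ x in (a + t)..(b + t), cexp (2 * π * lam * x * I) =
      cexp (2 * π * lam * t * I) * ∫ x in a..b, cexp (2 * π * lam * x * I) := by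
  rw [← intervalIntegral.integral_comp_add_right, ← intervalIntegral.integral_const_mul]
  refine intervalIntegral.integral_congr fun x _ ↦ ?_
  simp only [← Complex.exp_add]
  push_cast
  ring_nf

def shiftPair (a b t : ℝ) (w : ℂ) : L2 := chiIco a b + w • chiIco (a + t) (b + t)

theorem inner_shiftPair_expChar {a b t : ℝ} (hab : a ≤ b) (h0 : 0 ≤ a) (ht : 0 ≤ t)
    (h1 : b + t ≤ 1) {w : ℂ} {lam : ℝ} (hw : conj w * cexp (2 * π * lam * t * I) = -1) :
    ⟪shiftPair a b t w, expChar (Ico a b ∪ Ico (a + t) (b + t)) lam⟫_ℂ = 0 := by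
  have hS : MeasurableSet (Ico a b ∪ Ico (a + t) (b + t)) :=
    measurableSet_Ico.union measurableSet_Ico
  rw [shiftPair, inner_add_left, inner_smul_left,
    inner_chiIco_expChar hab h0 (by linarith) hS subset_union_left,
    inner_chiIco_expChar (by linarith) (by linarith) h1 hS subset_union_right,
    integral_cexp_add_right, ← mul_assoc, hw]
  ring

theorem inner_chiIco_shiftPair {a b t : ℝ} (hab : a ≤ b) (hbt : b ≤ a + t) (h0 : 0 ≤ a)
    (h1 : b + t ≤ 1) (w : ℂ) :
    ⟪chiIco a b, shiftPair a b t w⟫_ℂ = b - a := by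
  have hdisj : Ico a b ∩ Ico (a + t) (b + t) = ∅ :=
    eq_empty_of_forall_notMem fun x ⟨hx, hx'⟩ ↦ by linarith [hx.2, hx'.1]
  rw [shiftPair, inner_add_right, inner_smul_right, chiIco, chiIco,
    L2.inner_indicatorConstLp_one_indicatorConstLp_one,
    L2.inner_indicatorConstLp_one_indicatorConstLp_one, inter_self, hdisj,
    measureReal_μ01_Ico hab h0 (by linarith)]
  simp

theorem shiftPair_mem_L2on (a b t : ℝ) (w : ℂ) :
    shiftPair a b t w ∈ L2on (Ico a b ∪ Ico (a + t) (b + t)) := by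
  filter_upwards [Lp.coeFn_add (chiIco a b) (w • chiIco (a + t) (b + t)),
    Lp.coeFn_smul w (chiIco (a + t) (b + t)), coeFn_chiIco a b,
    coeFn_chiIco (a + t) (b + t)] with x hadd hsmul hJ hJ' hx
  rw [mem_union, not_or] at hx
  rw [shiftPair, hadd, Pi.add_apply, hsmul, Pi.smul_apply, hJ, hJ',
    indicator_of_notMem hx.1, indicator_of_notMem hx.2, smul_zero, add_zero]

theorem not_isRieszBasis_expChar_of_shift {ι : Type*} (lam : ι → ℝ) {a b t : ℝ} (w : ℂ)
    (hab : a < b) (hbt : b ≤ a + t) (h0 : 0 ≤ a) (h1 : b + t ≤ 1)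
    (hw : ∀ i, conj w * cexp (2 * π * lam i * t * I) = -1) :
    ¬ IsRieszBasis (fun i ↦ expChar (Ico a b ∪ Ico (a + t) (b + t)) (lam i))
      (L2on (Ico a b ∪ Ico (a + t) (b + t))) := by
  rintro ⟨-, hspan⟩
  have hne : shiftPair a b t w ≠ 0 := fun h ↦ by
    have hinner := inner_chiIco_shiftPair hab.le hbt h0 h1 w
    rw [h, inner_zero_right, eq_comm, sub_eq_zero] at hinner
    exact hab.ne' (mod_cast hinner)
  refine notMem_closure_span_of_inner_eq_zero _ hne
    (fun i ↦ inner_shiftPair_expChar hab.le h0 (by linarith) h1 (hw i)) ?_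
  rw [hspan]
  exact shiftPair_mem_L2on a b t w

theorem cexp_two_pi_mul_int_mul_half (n : ℤ) :
    cexp (2 * π * (n : ℝ) * (1 / 2 : ℝ) * I) = (-1) ^ n := by
  rw [← exp_pi_mul_I, ← Complex.exp_int_mul]
  congr 1
  push_cast
  ring

/-- With `I_k = [(k−1)/4, k/4)`, the system
`E(I_1 ∪ I_3, 4ℤ ∪ (4ℤ+2))` is not a Riesz basis for `L²(I_1 ∪ I_3)`, and
`E(I_2 ∪ I_4, (4ℤ+1) ∪ (4ℤ+3))` is not a Riesz basis for `L²(I_2 ∪ I_4)`. -/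
theorem stmt_16 :
    ¬ IsRieszBasis
        (fun l : {n : ℤ // n % 4 = 0 ∨ n % 4 = 2} =>
          expChar (Set.Ico (0 : ℝ) (1/4) ∪ Set.Ico (2/4 : ℝ) (3/4)) (((l : ℤ) : ℝ)))
        (L2on (Set.Ico (0 : ℝ) (1/4) ∪ Set.Ico (2/4 : ℝ) (3/4))) ∧
    ¬ IsRieszBasis
        (fun l : {n : ℤ // n % 4 = 1 ∨ n % 4 = 3} =>
          expChar (Set.Ico (1/4 : ℝ) (2/4) ∪ Set.Ico (3/4 : ℝ) 1) (((l : ℤ) : ℝ)))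
        (L2on (Set.Ico (1/4 : ℝ) (2/4) ∪ Set.Ico (3/4 : ℝ) 1)) := by
  constructor
  · rw [show Ico (2/4 : ℝ) (3/4) = Ico (0 + 1/2) (1/4 + 1/2) by norm_num]
    refine not_isRieszBasis_expChar_of_shift _ (-1) (by norm_num) (by norm_num) le_rfl
      (by norm_num) fun l ↦ ?_
    have heven : Even (l : ℤ) := by rcases l.2 with h | h <;> exact Int.even_iff.2 (by omega)
    rw [cexp_two_pi_mul_int_mul_half, heven.neg_one_zpow]
    simp
  · rw [show Ico (3/4 : ℝ) 1 = Ico (1/4 + 1/2) (2/4 + 1/2) by norm_num]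
    refine not_isRieszBasis_expChar_of_shift _ 1 (by norm_num) (by norm_num) (by norm_num)
      (by norm_num) fun l ↦ ?_
    have hodd : Odd (l : ℤ) := by rcases l.2 with h | h <;> exact Int.odd_iff.2 (by omega)
    rw [cexp_two_pi_mul_int_mul_half, hodd.neg_one_zpow]
    simp
end
end
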